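/- Let A ∈ M(4,ℂ) with A and A* having no common eigenvector, and let v ≠ 0 satisfy dim W(v) = 2 where W(v) = span{v,Av,A*v}, together with W(v) + A·W(v) = W(v) + A*·W(v) =: W₃ with dim W₃ = 3. Then the flag 0 ⊂ ℂv ⊂ W(v) ⊂ W₃ ⊂ ℂ⁴ satisfies A Wᵢ ⊆ W_{i+1} and A* Wᵢ ⊆ W_{i+1} for all i, and hence A is unitarily tridiagonalisable. -/

import Mathlib

open Matrix

/-- A matrix is tridiagonal if all entries with |i-j| ≥ 2 vanish. -/
def IsTridiagonal {n : ℕ} (B : Matrix (Fin n) (Fin n) ℂ) : Prop :=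
  ∀ i j : Fin n, 2 ≤ |(i : ℤ) - (j : ℤ)| → B i j = 0

/-- A is unitarily tridiagonalisable. -/
def IsUnitarilyTridiagonalisable {n : ℕ} (A : Matrix (Fin n) (Fin n) ℂ) : Prop :=
  ∃ U ∈ Matrix.unitaryGroup (Fin n) ℂ, IsTridiagonal (U * A * Uᴴ)

/-!
The inclusions are immediate: `A v` and `A* v` lie in `W(v)` by its definition, and `W₃` contains
both `A·W(v)` and `A*·W(v)`. For the tridiagonalisation, complete `ℂv ⊂ W(v) ⊂ W₃` to a full flag
`0 = F₀ ⊂ F₁ ⊂ ⋯ ⊂ Fₙ` and pick unit vectors `bᵢ ∈ Fᵢ₊₁ ⊖ Fᵢ`; they form an orthonormal basis. If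
`A` maps each `Fₖ` into `Fₖ₊₁` then `⟪bᵢ, A bⱼ⟫ = 0` for `i ≥ j + 2`, since `A bⱼ ∈ Fⱼ₊₂ ⊆ Fᵢ ⊥ bᵢ`;
the same for `A*` gives `⟪bᵢ, A bⱼ⟫ = conj ⟪bⱼ, A* bᵢ⟫ = 0` for `j ≥ i + 2`.
-/

open Module Submodule

section Flag

variable {𝕜 E : Type*} [RCLike 𝕜] [NormedAddCommGroup E] [InnerProductSpace 𝕜 E]

lemma exists_mem_norm_eq_one_of_finrank_pos {K : Submodule 𝕜 E} (hK : 0 < finrank 𝕜 K) :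
    ∃ x ∈ K, ‖x‖ = 1 := by
  have : Nontrivial K := Module.nontrivial_of_finrank_pos hK
  obtain ⟨x, hx⟩ := exists_ne (0 : K)
  have hx' : (x : E) ≠ 0 := by exact_mod_cast hx
  exact ⟨(‖(x : E)‖⁻¹ : 𝕜) • (x : E), K.smul_mem _ x.2, norm_smul_inv_norm hx'⟩

lemma inner_map_eq_zero_of_flag {F : ℕ → Submodule 𝕜 E} (hmono : Monotone F) {T : E →ₗ[𝕜] E}
    (hT : ∀ k, (F k).map T ≤ F (k + 1)) {i j : ℕ} (hij : j + 2 ≤ i) {x y : E}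
    (hx : x ∈ F (j + 1)) (hy : y ∈ (F i)ᗮ) : inner 𝕜 y (T x) = 0 :=
  inner_left_of_mem_orthogonal (hmono hij (hT _ (mem_map_of_mem hx))) hy

variable [FiniteDimensional 𝕜 E]

lemma exists_orthonormalBasis_adapted_to_flag {n : ℕ} (hn : finrank 𝕜 E = n)
    {F : ℕ → Submodule 𝕜 E} (hmono : Monotone F) (hdim : ∀ k ≤ n, finrank 𝕜 (F k) = k) :
    ∃ b : OrthonormalBasis (Fin n) 𝕜 E, ∀ i : Fin n, b i ∈ (F i)ᗮ ⊓ F (i + 1) := by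
  have hunit (i : Fin n) : ∃ x ∈ (F i)ᗮ ⊓ F (i + 1), ‖x‖ = 1 := by
    refine exists_mem_norm_eq_one_of_finrank_pos ?_
    rw [finrank_add_inf_finrank_orthogonal' (hmono (Nat.le_succ i))
      (by rw [hdim i i.2.le, hdim (i + 1) i.2])]
    exact one_pos
  choose b hbF hbnorm using hunit
  have hon : Orthonormal 𝕜 b := by
    refine ⟨hbnorm, fun i j hij => ?_⟩
    rcases lt_or_gt_of_ne hij with hlt | hlt
    · exact inner_right_of_mem_orthogonal (hmono (Nat.succ_le_of_lt hlt) (hbF i).2) (hbF j).1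
    · exact inner_left_of_mem_orthogonal (hmono (Nat.succ_le_of_lt hlt) (hbF j).2) (hbF i).1
  refine ⟨OrthonormalBasis.mk hon
    (hon.linearIndependent.span_eq_top_of_card_eq_finrank' (by simp [hn])).ge, fun i => ?_⟩
  rw [OrthonormalBasis.coe_mk]
  exact hbF i

theorem exists_orthonormalBasis_tridiagonal_of_flag {n : ℕ} (hn : finrank 𝕜 E = n)
    {F : ℕ → Submodule 𝕜 E} (hmono : Monotone F) (hdim : ∀ k ≤ n, finrank 𝕜 (F k) = k)
    {T : E →ₗ[𝕜] E} (hT : ∀ k, (F k).map T ≤ F (k + 1))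
    (hT' : ∀ k, (F k).map T.adjoint ≤ F (k + 1)) :
    ∃ b : OrthonormalBasis (Fin n) 𝕜 E,
      ∀ i j : Fin n, 2 ≤ |(i : ℤ) - j| → inner 𝕜 (b i) (T (b j)) = 0 := by
  obtain ⟨b, hb⟩ := exists_orthonormalBasis_adapted_to_flag hn hmono hdim
  refine ⟨b, fun i j hij => ?_⟩
  rcases le_abs'.1 hij with hji | hij
  · rw [← LinearMap.adjoint_inner_left, ← inner_conj_symm,
      inner_map_eq_zero_of_flag hmono hT' (by omega) (hb i).2 (hb j).1, map_zero]
  · exact inner_map_eq_zero_of_flag hmono hT (by omega) (hb j).2 (hb i).1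

end Flag

lemma conjTranspose_toMatrix_mul_mul_toMatrix_apply {n : ℕ} (A : Matrix (Fin n) (Fin n) ℂ)
    (b : OrthonormalBasis (Fin n) ℂ (EuclideanSpace ℂ (Fin n))) (i j : Fin n) :
    (((EuclideanSpace.basisFun (Fin n) ℂ).toBasis.toMatrix b)ᴴ * A *
      (EuclideanSpace.basisFun (Fin n) ℂ).toBasis.toMatrix b) i j =
      inner ℂ (b i) (toEuclideanLin A (b j)) := by
  simp only [Matrix.mul_apply, conjTranspose_apply, Basis.toMatrix_apply,
    OrthonormalBasis.coe_toBasis_repr_apply, EuclideanSpace.basisFun_repr, RCLike.star_def,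
    toLpLin_apply, PiLp.inner_apply, mulVec, dotProduct, RCLike.inner_apply, Finset.mul_sum,
    mul_comm, mul_left_comm, mul_assoc]
  exact Finset.sum_comm

lemma isUnitarilyTridiagonalisable_of_orthonormalBasis {n : ℕ} (A : Matrix (Fin n) (Fin n) ℂ)
    (b : OrthonormalBasis (Fin n) ℂ (EuclideanSpace ℂ (Fin n)))
    (hb : ∀ i j : Fin n, 2 ≤ |(i : ℤ) - j| → inner ℂ (b i) (toEuclideanLin A (b j)) = 0) :
    IsUnitarilyTridiagonalisable A := by
  -- the columns of `P` are the vectors `b j`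
  set P := (EuclideanSpace.basisFun (Fin n) ℂ).toBasis.toMatrix b
  refine ⟨Pᴴ, Unitary.star_mem (OrthonormalBasis.toMatrix_orthonormalBasis_mem_unitary _ b),
    fun i j hij => ?_⟩
  rw [conjTranspose_conjTranspose, conjTranspose_toMatrix_mul_mul_toMatrix_apply]
  exact hb i j hij

theorem isUnitarilyTridiagonalisable_of_flag {n : ℕ} (A : Matrix (Fin n) (Fin n) ℂ)
    {F : ℕ → Submodule ℂ (Fin n → ℂ)} (hmono : Monotone F) (hdim : ∀ k ≤ n, finrank ℂ (F k) = k)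
    (hA : ∀ k, (F k).map A.mulVecLin ≤ F (k + 1)) (hA' : ∀ k, (F k).map Aᴴ.mulVecLin ≤ F (k + 1)) :
    IsUnitarilyTridiagonalisable A := by
  let e : (Fin n → ℂ) ≃ₗ[ℂ] EuclideanSpace ℂ (Fin n) := (WithLp.linearEquiv 2 ℂ (Fin n → ℂ)).symm
  let G (k : ℕ) : Submodule ℂ (EuclideanSpace ℂ (Fin n)) := (F k).map (e : (Fin n → ℂ) →ₗ[ℂ] _)
  have hflag (B : Matrix (Fin n) (Fin n) ℂ) (hB : ∀ k, (F k).map B.mulVecLin ≤ F (k + 1)) (k : ℕ) :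
      (G k).map (toEuclideanLin B) ≤ G (k + 1) := by
    rintro _ ⟨_, ⟨x, hx, rfl⟩, rfl⟩
    exact ⟨B *ᵥ x, hB k (mem_map_of_mem hx), rfl⟩
  obtain ⟨b, hb⟩ := exists_orthonormalBasis_tridiagonal_of_flag finrank_euclideanSpace_fin
    (fun _ _ h => map_mono (hmono h)) (fun k hk => by rw [LinearEquiv.finrank_map_eq, hdim k hk])
    (hflag A hA) (by rw [← toEuclideanLin_conjTranspose_eq_adjoint]; exact hflag Aᴴ hA')
  exact isUnitarilyTridiagonalisable_of_orthonormalBasis A b hb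

lemma isUnitarilyTridiagonalisable_of_flag_fin_four (A : Matrix (Fin 4) (Fin 4) ℂ)
    {W₁ W₂ W₃ : Submodule ℂ (Fin 4 → ℂ)} (h₁₂ : W₁ ≤ W₂) (h₂₃ : W₂ ≤ W₃)
    (hW₁ : finrank ℂ W₁ = 1) (hW₂ : finrank ℂ W₂ = 2) (hW₃ : finrank ℂ W₃ = 3)
    (hA₁ : W₁.map A.mulVecLin ≤ W₂) (hA₂ : W₂.map A.mulVecLin ≤ W₃)
    (hA₁' : W₁.map Aᴴ.mulVecLin ≤ W₂) (hA₂' : W₂.map Aᴴ.mulVecLin ≤ W₃) :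
    IsUnitarilyTridiagonalisable A := by
  let F : ℕ → Submodule ℂ (Fin 4 → ℂ)
    | 0 => ⊥ | 1 => W₁ | 2 => W₂ | 3 => W₃ | _ => ⊤
  have hmono : Monotone F := by
    refine monotone_nat_of_le_succ fun k => ?_
    rcases k with _ | _ | _ | k
    exacts [bot_le, h₁₂, h₂₃, le_top]
  have hdim (k : ℕ) (hk : k ≤ 4) : finrank ℂ (F k) = k := by
    interval_cases k
    exacts [finrank_bot ℂ _, hW₁, hW₂, hW₃, (finrank_top ℂ _).trans (finrank_fin_fun ℂ)]
  have hshift (B : Matrix (Fin 4) (Fin 4) ℂ) (hB₁ : W₁.map B.mulVecLin ≤ W₂)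
      (hB₂ : W₂.map B.mulVecLin ≤ W₃) (k : ℕ) : (F k).map B.mulVecLin ≤ F (k + 1) := by
    rcases k with _ | _ | _ | k
    exacts [(Submodule.map_bot _).trans_le bot_le, hB₁, hB₂, le_top]
  exact isUnitarilyTridiagonalisable_of_flag A hmono hdim (hshift A hA₁ hA₂) (hshift Aᴴ hA₁' hA₂')

theorem flag_of_coincident_W3_general (A : Matrix (Fin 4) (Fin 4) ℂ)
    (v : Fin 4 → ℂ) (hv : v ≠ 0)
    (W : Submodule ℂ (Fin 4 → ℂ))
    (hWdef : W = Submodule.span ℂ {v, A.mulVec v, Aᴴ.mulVec v})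
    (hWdim : Module.finrank ℂ W = 2)
    (W₃ : Submodule ℂ (Fin 4 → ℂ))
    (hW₃ : W₃ = W ⊔ W.map A.mulVecLin)
    (hW₃' : W₃ = W ⊔ W.map Aᴴ.mulVecLin)
    (hW₃dim : Module.finrank ℂ W₃ = 3) :
    ((Submodule.span ℂ {v}).map A.mulVecLin ≤ W ∧
     (Submodule.span ℂ {v}).map Aᴴ.mulVecLin ≤ W ∧
     W.map A.mulVecLin ≤ W₃ ∧ W.map Aᴴ.mulVecLin ≤ W₃) ∧
    IsUnitarilyTridiagonalisable A := by
  have hW (x : Fin 4 → ℂ) (hx : x ∈ ({v, A *ᵥ v, Aᴴ *ᵥ v} : Set (Fin 4 → ℂ))) : x ∈ W :=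
    hWdef ▸ subset_span hx
  have hvW : span ℂ {v} ≤ W := (span_singleton_le_iff_mem _ _).2 (hW v (by simp))
  have hA₁ : (span ℂ {v}).map A.mulVecLin ≤ W := by
    rw [map_span, Set.image_singleton, span_singleton_le_iff_mem]
    exact hW _ (by simp)
  have hA₁' : (span ℂ {v}).map Aᴴ.mulVecLin ≤ W := by
    rw [map_span, Set.image_singleton, span_singleton_le_iff_mem]
    exact hW _ (by simp)
  have hWW₃ : W ≤ W₃ := hW₃ ▸ le_sup_left
  have hA₂ : W.map A.mulVecLin ≤ W₃ := hW₃ ▸ le_sup_right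
  have hA₂' : W.map Aᴴ.mulVecLin ≤ W₃ := hW₃' ▸ le_sup_right
  exact ⟨⟨hA₁, hA₁', hA₂, hA₂'⟩, isUnitarilyTridiagonalisable_of_flag_fin_four A hvW hWW₃
    (finrank_span_singleton hv) hWdim hW₃dim hA₁ hA₂ hA₁' hA₂'⟩

theorem flag_of_coincident_W3 (A : Matrix (Fin 4) (Fin 4) ℂ)
    (hcommon : ¬ ∃ v : Fin 4 → ℂ, v ≠ 0 ∧ (∃ μ : ℂ, A.mulVec v = μ • v) ∧
      (∃ ν : ℂ, Aᴴ.mulVec v = ν • v))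
    (v : Fin 4 → ℂ) (hv : v ≠ 0)
    (W : Submodule ℂ (Fin 4 → ℂ))
    (hWdef : W = Submodule.span ℂ {v, A.mulVec v, Aᴴ.mulVec v})
    (hWdim : Module.finrank ℂ W = 2)
    (W₃ : Submodule ℂ (Fin 4 → ℂ))
    (hW₃ : W₃ = W ⊔ W.map A.mulVecLin)
    (hW₃' : W₃ = W ⊔ W.map Aᴴ.mulVecLin)
    (hW₃dim : Module.finrank ℂ W₃ = 3) :
    ((Submodule.span ℂ {v}).map A.mulVecLin ≤ W ∧
     (Submodule.span ℂ {v}).map Aᴴ.mulVecLin ≤ W ∧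
     W.map A.mulVecLin ≤ W₃ ∧ W.map Aᴴ.mulVecLin ≤ W₃) ∧
    IsUnitarilyTridiagonalisable A :=
  flag_of_coincident_W3_general A v hv W hWdef hWdim W₃ hW₃ hW₃' hW₃dim
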